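/- The explicit velocity field v̄ together with the pressure P₀ is a solution of the 3D incompressible Navier–Stokes equations on [0,T*) × ℝ³: for every ν ≥ 0 and all t ∈ [0,T*), x ∈ ℝ³, ∂_t v̄ + (v̄·∇)v̄ + ∇P₀ = ν Δv̄ and ∇·v̄ = 0. -/

import Mathlib

/-- Partial derivative of `f : ℝ³ → ℝ` in the `j`-th coordinate direction at `x`. -/
noncomputable def pd (f : (Fin 3 → ℝ) → ℝ) (j : Fin 3) (x : Fin 3 → ℝ) : ℝ :=
  deriv (fun s => f (Function.update x j s)) (x j)

/-- Laplacian of `f : ℝ³ → ℝ` at `x`. -/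
noncomputable def lap (f : (Fin 3 → ℝ) → ℝ) (x : Fin 3 → ℝ) : ℝ :=
  ∑ j : Fin 3, pd (fun y => pd f j y) j x

/-- The explicit blowup velocity field `v̄`. -/
noncomputable def vbar (T a k : ℝ) (t : ℝ) (x : Fin 3 → ℝ) : Fin 3 → ℝ :=
  ![a * x 0 / (T - t) + k * x 1 * (T - t) ^ (2 * a),
    a * x 1 / (T - t) - k * x 0 * (T - t) ^ (2 * a),
    -2 * a * x 2 / (T - t)]

/-- The explicit blowup magnetic field `H̄`. -/
noncomputable def Hbar (T a ab k : ℝ) (t : ℝ) (x : Fin 3 → ℝ) : Fin 3 → ℝ :=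
  ![ab * x 0 + 2 * ab * k * x 1 * x 2 * (T - t) ^ (2 * a + 1) / (4 * a + 1),
    ab * x 1 - 2 * ab * k * x 0 * x 2 * (T - t) ^ (2 * a + 1) / (4 * a + 1),
    -2 * ab * x 2]

/-- The explicit Navier–Stokes pressure `P₀`. -/
noncomputable def P0 (T a k : ℝ) (t : ℝ) (x : Fin 3 → ℝ) : ℝ :=
  ((x 0) ^ 2 + (x 1) ^ 2) / 2 * (k ^ 2 * (T - t) ^ (4 * a) - a * (a + 1) / (T - t) ^ 2)
    + a * (1 - 2 * a) * (x 2) ^ 2 / (T - t) ^ 2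

/-! The field `v̄(t)` is linear in `x`, `v̄(t, x) = A(t) x`, with `tr A(t) = 0`, and `P₀(t)` is the
diagonal quadratic form `½ ∑ dₗ(t) xₗ²`. For such a pair the viscous term vanishes, the convective
term is `A² x` and `∇P₀ = D x` with `D = diag d`, so the Navier–Stokes equations at time `t` reduce
to the matrix Riccati equation `A' + A² + D = 0`. For `v̄` this is an identity between explicit
entries, the only input being `d/dt (T - t)^(2a) = -2a (T - t)^(2a) / (T - t)`. -/

theorem HasFDerivAt.pd_eq {f : (Fin 3 → ℝ) → ℝ} {f' : (Fin 3 → ℝ) →L[ℝ] ℝ} {x : Fin 3 → ℝ}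
    (h : HasFDerivAt f f' x) (j : Fin 3) : pd f j x = f' (Pi.single j 1) := by
  have hx := (Function.update_eq_self j x).symm ▸ h
  exact (hx.comp_hasDerivAt (x j) (hasDerivAt_update x j (x j))).deriv

theorem pd_const (c : ℝ) (j : Fin 3) (x : Fin 3 → ℝ) : pd (fun _ => c) j x = 0 :=
  deriv_const _ c

theorem pd_sum_mul_sq_div_two (d : Fin 3 → ℝ) (i : Fin 3) (x : Fin 3 → ℝ) :
    pd (fun y => ∑ l, d l * y l ^ 2 / 2) i x = d i * x i := by
  have hcoord (l : Fin 3) : HasFDerivAt (fun y : Fin 3 → ℝ => y l) (ContinuousLinearMap.proj l) x :=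
    hasFDerivAt_apply (𝕜 := ℝ) (F' := fun _ => ℝ) l x
  have h := HasFDerivAt.fun_sum (u := Finset.univ)
    fun l _ => (((hcoord l).pow 2).const_mul (d l)).mul_const (1 / 2 : ℝ)
  simp only [mul_one_div] at h
  rw [h.pd_eq]
  simp only [Nat.add_one_sub_one, pow_one, nsmul_eq_mul, Nat.cast_ofNat, sum_apply,
    smul_apply, ContinuousLinearMap.proj_apply, Pi.single_apply, smul_eq_mul,
    mul_ite, mul_one, mul_zero, Finset.sum_ite_eq', Finset.mem_univ, ↓reduceIte]
  ring

section

open Matrix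

section LinearField

variable (A : Matrix (Fin 3) (Fin 3) ℝ)

theorem pd_mulVec (i j : Fin 3) (x : Fin 3 → ℝ) : pd (fun y => (A *ᵥ y) i) j x = A i j := by
  have h : HasFDerivAt (fun y => (A *ᵥ y) i)
      ((ContinuousLinearMap.proj i).comp A.mulVecLin.toContinuousLinearMap) x :=
    ((ContinuousLinearMap.proj i).comp A.mulVecLin.toContinuousLinearMap).hasFDerivAt
  rw [h.pd_eq]
  simp

theorem lap_mulVec (i : Fin 3) (x : Fin 3 → ℝ) : lap (fun y => (A *ᵥ y) i) x = 0 := by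
  simp [lap, pd_mulVec, pd_const]

theorem sum_pd_mulVec (x : Fin 3 → ℝ) : ∑ j, pd (fun y => (A *ᵥ y) j) j x = A.trace := by
  simp [pd_mulVec, Matrix.trace]

end LinearField

theorem hasDerivAt_mulVec_apply {A : ℝ → Matrix (Fin 3) (Fin 3) ℝ} {A' : Matrix (Fin 3) (Fin 3) ℝ}
    {t : ℝ} (hA : ∀ i j, HasDerivAt (fun s => A s i j) (A' i j) t) (x : Fin 3 → ℝ) (i : Fin 3) :
    HasDerivAt (fun s => (A s *ᵥ x) i) ((A' *ᵥ x) i) t := by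
  simp only [mulVec, dotProduct]
  exact HasDerivAt.fun_sum fun j _ => (hA i j).mul_const (x j)

theorem navierStokes_mulVec_of_riccati {A : ℝ → Matrix (Fin 3) (Fin 3) ℝ}
    {A' : Matrix (Fin 3) (Fin 3) ℝ} {d : Fin 3 → ℝ} {t : ℝ}
    (hA : ∀ i j, HasDerivAt (fun s => A s i j) (A' i j) t)
    (hriccati : A' + A t * A t + diagonal d = 0) (ν : ℝ) (x : Fin 3 → ℝ) (i : Fin 3) :
    deriv (fun s => (A s *ᵥ x) i) t
        + ∑ j, (A t *ᵥ x) j * pd (fun y => (A t *ᵥ y) i) j x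
        + pd (fun y => ∑ l, d l * y l ^ 2 / 2) i x
      = ν * lap (fun y => (A t *ᵥ y) i) x := by
  have h := congrFun (congrArg (· *ᵥ x) hriccati) i
  simp only [add_mulVec, ← mulVec_mulVec, mulVec_diagonal, zero_mulVec, Pi.add_apply,
    Pi.zero_apply] at h
  rw [(hasDerivAt_mulVec_apply hA x i).deriv, lap_mulVec, pd_sum_mul_sq_div_two, mul_zero]
  simp only [pd_mulVec]
  rw [← h]
  simp only [mulVec, dotProduct, mul_comm]

theorem hasDerivAt_const_div_sub (c : ℝ) {T t : ℝ} (ht : t ≠ T) :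
    HasDerivAt (fun s => c / (T - s)) (c / (T - t) ^ 2) t := by
  have h := ((hasDerivAt_id t).const_sub T).inv (sub_ne_zero.2 ht.symm) |>.const_mul c
  simpa [div_eq_mul_inv] using h

theorem hasDerivAt_sub_rpow (p : ℝ) {T t : ℝ} (ht : t < T) :
    HasDerivAt (fun s => (T - s) ^ p) (-(p * (T - t) ^ p / (T - t))) t := by
  have hτ : 0 < T - t := sub_pos.2 ht
  have h := ((hasDerivAt_id' t).const_sub T).rpow_const (p := p) (Or.inl hτ.ne')
  rw [Real.rpow_sub_one hτ.ne'] at h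
  convert h using 1
  ring

noncomputable def vbarMatrix (T a k t : ℝ) : Matrix (Fin 3) (Fin 3) ℝ :=
  !![a / (T - t), k * (T - t) ^ (2 * a), 0;
    -(k * (T - t) ^ (2 * a)), a / (T - t), 0;
    0, 0, -2 * a / (T - t)]

noncomputable def vbarMatrixDeriv (T a k t : ℝ) : Matrix (Fin 3) (Fin 3) ℝ :=
  !![a / (T - t) ^ 2, -(2 * a * k * (T - t) ^ (2 * a) / (T - t)), 0;
    2 * a * k * (T - t) ^ (2 * a) / (T - t), a / (T - t) ^ 2, 0;
    0, 0, -2 * a / (T - t) ^ 2]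

noncomputable def P0HessianDiag (T a k t : ℝ) : Fin 3 → ℝ :=
  ![k ^ 2 * (T - t) ^ (4 * a) - a * (a + 1) / (T - t) ^ 2,
    k ^ 2 * (T - t) ^ (4 * a) - a * (a + 1) / (T - t) ^ 2,
    2 * a * (1 - 2 * a) / (T - t) ^ 2]

section Blowup

variable (T a k : ℝ)

theorem vbar_eq_mulVec (t : ℝ) (x : Fin 3 → ℝ) : vbar T a k t x = vbarMatrix T a k t *ᵥ x := by
  ext i
  fin_cases i <;>
    simp only [vbar, vbarMatrix, mulVec, dotProduct, of_apply, Fin.sum_univ_three, Fin.zero_eta,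
      Fin.mk_one, Fin.reduceFinMk, cons_val', cons_val, cons_val_zero, cons_val_one,
      cons_val_fin_one, zero_mul, add_zero, zero_add] <;>
    ring

theorem P0_eq_sum (t : ℝ) (x : Fin 3 → ℝ) :
    P0 T a k t x = ∑ l, P0HessianDiag T a k t l * x l ^ 2 / 2 := by
  simp only [P0, P0HessianDiag, Fin.sum_univ_three, cons_val_zero, cons_val_one, cons_val]
  ring

theorem trace_vbarMatrix (t : ℝ) : (vbarMatrix T a k t).trace = 0 := by
  simp only [trace, vbarMatrix, diag_apply, of_apply, Fin.sum_univ_three, cons_val',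
    cons_val_fin_one, cons_val_zero, cons_val_one, cons_val]
  ring

variable {T} {t : ℝ} (ht : t < T)
include ht

theorem hasDerivAt_vbarMatrix (i j : Fin 3) :
    HasDerivAt (fun s => vbarMatrix T a k s i j) (vbarMatrixDeriv T a k t i j) t := by
  have hdiv (c : ℝ) := hasDerivAt_const_div_sub c ht.ne
  have hpow : HasDerivAt (fun s => k * (T - s) ^ (2 * a))
      (-(2 * a * k * (T - t) ^ (2 * a) / (T - t))) t :=
    ((hasDerivAt_sub_rpow (2 * a) ht).const_mul k).congr_deriv (by ring)
  fin_cases i <;> fin_cases j <;> simp only [vbarMatrix, vbarMatrixDeriv, of_apply,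
    Fin.zero_eta, Fin.mk_one, Fin.reduceFinMk, cons_val', cons_val, cons_val_zero, cons_val_one,
    cons_val_fin_one]
  all_goals first
    | exact hdiv _ | exact hpow | exact hasDerivAt_const _ _ | simpa only [neg_neg] using hpow.fun_neg

theorem vbarMatrix_riccati :
    vbarMatrixDeriv T a k t + vbarMatrix T a k t * vbarMatrix T a k t
      + diagonal (P0HessianDiag T a k t) = 0 := by
  have hτ : T - t ≠ 0 := (sub_pos.2 ht).ne'
  have h4a : (T - t) ^ (4 * a) = (T - t) ^ (2 * a) * (T - t) ^ (2 * a) := by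
    rw [← Real.rpow_add (sub_pos.2 ht)]
    ring_nf
  ext i j
  fin_cases i <;> fin_cases j <;>
    simp [vbarMatrix, vbarMatrixDeriv, P0HessianDiag, h4a] <;>
    field_simp <;>
    ring

end Blowup

end

theorem vbar_navier_stokes_solution_general (T a k : ℝ) :
    ∀ ν : ℝ, 0 ≤ ν →
    ∀ t ∈ Set.Ico (0 : ℝ) T, ∀ x : Fin 3 → ℝ,
      (∀ i : Fin 3,
        deriv (fun s => vbar T a k s x i) t
          + (∑ j : Fin 3, vbar T a k t x j * pd (fun y => vbar T a k t y i) j x)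
          + pd (fun y => P0 T a k t y) i x
        = ν * lap (fun y => vbar T a k t y i) x) ∧
      (∑ j : Fin 3, pd (fun y => vbar T a k t y j) j x) = 0 := by
  intro ν _ t ht x
  simp only [vbar_eq_mulVec, P0_eq_sum]
  exact ⟨navierStokes_mulVec_of_riccati (hasDerivAt_vbarMatrix a k ht.2)
      (vbarMatrix_riccati a k ht.2) ν x,
    (sum_pd_mulVec _ x).trans (trace_vbarMatrix T a k t)⟩

/-- `(v̄, P₀)` solves the 3D incompressible Navier–Stokes
equations on `[0,T*) × ℝ³` for every `ν ≥ 0`. -/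
theorem vbar_navier_stokes_solution (T a k : ℝ) (hT : 0 < T) (hk : k ≠ 0) (ha : a ≠ 0) :
    ∀ ν : ℝ, 0 ≤ ν →
    ∀ t ∈ Set.Ico (0 : ℝ) T, ∀ x : Fin 3 → ℝ,
      (∀ i : Fin 3,
        deriv (fun s => vbar T a k s x i) t
          + (∑ j : Fin 3, vbar T a k t x j * pd (fun y => vbar T a k t y i) j x)
          + pd (fun y => P0 T a k t y) i x
        = ν * lap (fun y => vbar T a k t y i) x) ∧
      (∑ j : Fin 3, pd (fun y => vbar T a k t y j) j x) = 0 :=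
  vbar_navier_stokes_solution_general T a k
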